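/- Every solution K for the instance (A, k) of Distinct Vectors constructed from φ consists exactly of the log₂(s+1) consistency columns together with, for each i ∈ [log₂ r], exactly one column from B_i's columns, and contains no other columns. -/

import Mathlib

/-!
The construction of the paper.  Rows and columns are 0-indexed here:
* `r ≥ 2` is a power of two, the number of variables of the CNF formula `φ`;
  variables are elements of `Fin r`; a literal is a variable plus a polarity.
* `s = 2 ^ ℓ - 1` (with `ℓ ≥ 1`) is the number of clauses; clause `q : Fin s`
  is the finite set `Clause q` of literals.
* `L = log₂ r` is the number of bundles; bundle `i` is a list `B i` of exactly
  `r' = ⌈r / log₂ r⌉` variables (with repetitions allowed), and every variable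
  occurs in exactly one bundle.
* For every bundle `i` there is a list of `ρ = 2 ^ r'` truth assignments
  `asg i p : Fin r → Bool` (`p : Fin ρ`, only the values on `B i`'s variables are
  relevant) containing every assignment of `B i`'s variables at least once.
* The matrix `A` has `n = ℓ + ρ * L` columns: the `ℓ` consistency columns
  `0, …, ℓ - 1`, followed, for each bundle `i`, by `B i`'s columns
  `ℓ + i * ρ, …, ℓ + (i + 1) * ρ - 1` (the `p`-th corresponding to assignment `p`).
* The matrix `A` has `m = 1 + L + 2 * s` rows: the all-zero row `0`, the bundle
  indicator rows `1, …, L` (row `i + 1` is `1` exactly on bundle `i`'s columns),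
  and, for each clause `q : Fin s`, the odd row `1 + L + 2 * q` (the `ℓ`-bit binary
  encoding of `q + 1` on the consistency columns and `sat_i(p, q)` on the `p`-th of
  bundle `i`'s columns) and the even row `1 + L + 2 * q + 1` (the encoding of `q + 1`
  on the consistency columns and `0` elsewhere).
* `k = ℓ + L`.  A solution is a set `K` of at most `k` columns such that the rows
  of `A` restricted to the columns in `K` are pairwise distinct.
-/

/-- A literal over variables `Fin r`: a variable together with a polarity. -/
structure DVLit (r : ℕ) where
  var : Fin r
  pos : Bool
deriving DecidableEq

/-- All the data of the construction: the CNF formula `φ` (variables, clauses),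
the bundles, and the lists of truth assignments of each bundle. -/
structure DVInstance where
  /-- number of variables -/
  r : ℕ
  hr : 2 ≤ r
  hrpow : ∃ t : ℕ, r = 2 ^ t
  ℓ : ℕ
  hℓ : 1 ≤ ℓ
  /-- number of clauses -/
  s : ℕ
  hs : s = 2 ^ ℓ - 1
  /-- the clauses of `φ` -/
  Clause : Fin s → Finset (DVLit r)
  /-- the bundles: lists of variables of length `r' = ⌈r / log₂ r⌉` -/
  B : Fin (Nat.log 2 r) → List (Fin r)
  hBlen : ∀ i, (B i).length = (r + Nat.log 2 r - 1) / Nat.log 2 r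
  /-- every variable occurs in exactly one bundle -/
  hBpart : ∀ v : Fin r, ∃! i, v ∈ B i
  /-- the list of `ρ = 2 ^ r'` truth assignments of each bundle -/
  asg : Fin (Nat.log 2 r) → Fin (2 ^ ((r + Nat.log 2 r - 1) / Nat.log 2 r)) →
    Fin r → Bool
  /-- every assignment of a bundle's variables occurs at least once in its list -/
  hasg : ∀ i, ∀ β : Fin r → Bool, ∃ p, ∀ v ∈ B i, asg i p v = β v

namespace DVInstance

variable (D : DVInstance)

/-- `L = log₂ r`, the number of bundles. -/
def L : ℕ := Nat.log 2 D.r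

/-- `r' = ⌈r / log₂ r⌉`, the size of each bundle. -/
def r' : ℕ := (D.r + D.L - 1) / D.L

/-- `ρ = 2 ^ r'`, the number of columns of each bundle. -/
def ρ : ℕ := 2 ^ D.r'

/-- the number `n = log₂(s + 1) + ρ * log₂ r` of columns of `A`. -/
def n : ℕ := D.ℓ + D.ρ * D.L

/-- the number `m = 1 + log₂ r + 2 * s` of rows of `A`. -/
def m : ℕ := 1 + D.L + 2 * D.s

/-- the budget `k = log₂(s + 1) + log₂ r`. -/
def k : ℕ := D.ℓ + D.L

/-- `sat_i(p, q)`: whether the `p`-th assignment of bundle `i` makes clause `q` true,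
i.e. whether some literal of clause `q` whose variable belongs to bundle `i` is set
to its polarity by the `p`-th assignment of bundle `i` (nat-indexed version;
`false` outside the index ranges). -/
def satN (i p q : ℕ) : Bool :=
  if h : i < D.L ∧ p < D.ρ ∧ q < D.s then
    decide (∃ lit ∈ D.Clause ⟨q, h.2.2⟩, lit.var ∈ D.B ⟨i, h.1⟩ ∧
      D.asg ⟨i, h.1⟩ ⟨p, h.2.1⟩ lit.var = lit.pos)
  else false

/-- The constructed binary matrix `A` (rows and columns 0-indexed;
entries outside the `m × n` range are irrelevant). -/
def A (row col : ℕ) : Bool :=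
  if row = 0 then
    -- the all-zero row
    false
  else if row ≤ D.L then
    -- bundle indicator rows: row `i + 1` is `1` exactly on bundle `i`'s columns
    decide (D.ℓ + (row - 1) * D.ρ ≤ col ∧ col < D.ℓ + row * D.ρ)
  else if col < D.ℓ then
    -- clause rows on the consistency columns: the binary encoding of the
    -- (1-indexed) clause number
    Nat.testBit ((row - D.L - 1) / 2 + 1) col
  else if (row - D.L - 1) % 2 = 0 then
    -- odd row of clause `q = (row - L - 1) / 2`: `sat_i(p, q)` on the `p`-th of
    -- bundle `i`'s columns
    D.satN ((col - D.ℓ) / D.ρ) ((col - D.ℓ) % D.ρ) ((row - D.L - 1) / 2)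
  else
    -- even row of clause `q`: zero outside the consistency columns
    false

/-- `K` is a solution for the instance `(A, k)`: a set of at most `k` columns of `A`
such that the rows of `A` restricted to the columns in `K` are pairwise distinct. -/
def Solution (K : Finset ℕ) : Prop :=
  (∀ c ∈ K, c < D.n) ∧ K.card ≤ D.k ∧
    ∀ i j, i < D.m → j < D.m → i ≠ j → ∃ c ∈ K, D.A i c ≠ D.A j c

end DVInstance

/-!
Row 0 of `A` is zero, so a solution must hit the support of every other row. The even
row of clause `2 ^ c - 1` is supported exactly on consistency column `c`, and the
indicator row of bundle `i` on `B i`'s columns; this forces the `ℓ` consistency columns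
and one column per bundle into `K`. These are already `ℓ + log₂ r = k` columns, so
`|K| ≤ k` leaves room for nothing else.
-/

namespace DVInstance

variable (D : DVInstance)

theorem A_zero_row (c : ℕ) : D.A 0 c = false := by
  simp [A]

theorem A_indicator_row {i : ℕ} (hi : i < D.L) (c : ℕ) :
    D.A (i + 1) c = decide (D.ℓ + i * D.ρ ≤ c ∧ c < D.ℓ + (i + 1) * D.ρ) := by
  simp [A, Nat.succ_le_of_lt hi]

theorem A_even_clause_row (q c : ℕ) :
    D.A (D.L + 2 * q + 2) c = (decide (c < D.ℓ) && (q + 1).testBit c) := by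
  have hdiv : (D.L + 2 * q + 2 - D.L - 1) / 2 = q := by omega
  have hmod : (D.L + 2 * q + 2 - D.L - 1) % 2 = 1 := by omega
  have hrow : ¬ D.L + 2 * q + 2 ≤ D.L := by omega
  by_cases hc : c < D.ℓ <;> simp [A, hc, hdiv, hmod, hrow]

theorem bundle_index_eq {i c : ℕ} (h : D.ℓ + i * D.ρ ≤ c ∧ c < D.ℓ + (i + 1) * D.ρ) :
    (c - D.ℓ) / D.ρ = i :=
  Nat.div_eq_of_lt_le (by omega) (by omega)

variable {D} {K : Finset ℕ}

theorem Solution.exists_mem_A_eq_true (hK : D.Solution K) {j : ℕ} (hj0 : j ≠ 0)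
    (hj : j < D.m) : ∃ c ∈ K, D.A j c = true := by
  obtain ⟨c, hcK, hne⟩ := hK.2.2 0 j (by unfold m; omega) hj hj0.symm
  rw [A_zero_row, ne_eq, eq_comm, Bool.not_eq_false] at hne
  exact ⟨c, hcK, hne⟩

theorem Solution.range_subset (hK : D.Solution K) : Finset.range D.ℓ ⊆ K := by
  intro c hc
  rw [Finset.mem_range] at hc
  have hpow : 2 ^ c < 2 ^ D.ℓ := Nat.pow_lt_pow_right (by norm_num) hc
  have hpos : 0 < 2 ^ c := Nat.two_pow_pos c
  -- clause number `q + 1 = 2 ^ c` is encoded by the single bit `c`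
  obtain ⟨c', hc'K, hc'⟩ := hK.exists_mem_A_eq_true (j := D.L + 2 * (2 ^ c - 1) + 2)
    (by omega) (by unfold m; have := D.hs; omega)
  rw [A_even_clause_row, Nat.sub_add_cancel hpos, Nat.testBit_two_pow] at hc'
  simp only [Bool.and_eq_true, decide_eq_true_eq] at hc'
  exact hc'.2 ▸ hc'K

theorem Solution.exists_mem_bundle (hK : D.Solution K) (i : Fin D.L) :
    ∃ c ∈ K, D.ℓ + i.val * D.ρ ≤ c ∧ c < D.ℓ + (i.val + 1) * D.ρ := by
  obtain ⟨c, hcK, hc⟩ := hK.exists_mem_A_eq_true (j := i.val + 1) (by omega)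
    (by unfold m; omega)
  rw [A_indicator_row D i.isLt, decide_eq_true_eq] at hc
  exact ⟨c, hcK, hc⟩

end DVInstance

/-- Every solution `K` for the constructed instance `(A, k)` consists
exactly of the `log₂(s + 1) = ℓ` consistency columns together with, for each bundle
`i`, exactly one column among `B i`'s columns, and nothing else. -/
theorem solution_structure (D : DVInstance) (K : Finset ℕ) (hK : D.Solution K) :
    ∃ f : Fin D.L → ℕ,
      (∀ i, D.ℓ + i.val * D.ρ ≤ f i ∧ f i < D.ℓ + (i.val + 1) * D.ρ) ∧
      K = Finset.range D.ℓ ∪ Finset.image f Finset.univ := by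
  choose f hfK hf using hK.exists_mem_bundle
  refine ⟨f, hf, ?_⟩
  have hinj : Function.Injective f := fun i j hij =>
    Fin.ext <| (D.bundle_index_eq (hf i)).symm.trans (hij ▸ D.bundle_index_eq (hf j))
  have hdisj : Disjoint (Finset.range D.ℓ) (Finset.image f Finset.univ) := by
    simp only [Finset.disjoint_left, Finset.mem_range, Finset.mem_image]
    rintro c hc ⟨i, -, rfl⟩
    exact absurd (hf i).1 (by omega)
  have hsub : Finset.range D.ℓ ∪ Finset.image f Finset.univ ⊆ K :=
    Finset.union_subset hK.range_subset
      (Finset.image_subset_iff.2 fun i _ => hfK i)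
  refine (Finset.eq_of_subset_of_card_le hsub ?_).symm
  rw [Finset.card_union_of_disjoint hdisj, Finset.card_range,
    Finset.card_image_of_injective _ hinj, Finset.card_univ, Fintype.card_fin]
  exact hK.2.1
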